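/- Let γ ∈ [1/2, 1), T a finite set, R₁ : T → ℝ with non-constant discounted return G₁, and α > 0 with G₁(ξ) ≤ 1/(2α) for all ξ. Then there is no R₂ : T → ℝ whose discounted return G₂ satisfies G₂(ξ) = G₁(ξ) - α·G₁(ξ)² for all ξ ∈ T^ℕ. -/

import Mathlib

/-!
Prepending a state `s` to a trajectory `ξ` turns a discounted return `G` into `R s + γ G(ξ)`.
If `G₂ = U ∘ G₁` for `U(x) = x - α x²`, this gives `U(R₁ s + γ x) = R₂ s + γ U(x)` for every
value `x` of `G₁`. Comparing two distinct values `a ≠ b` cancels `R₂ s` and, since `U` is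
quadratic, forces `2 R₁ s = (1 - γ)(a + b)` for every `s`. So `R₁` is constant, and then so is
`G₁`.
-/

noncomputable def discountedReturn {T : Type*} (γ : ℝ) (R : T → ℝ) (ξ : ℕ → T) : ℝ :=
  ∑' j : ℕ, γ ^ j * R (ξ j)

def prepend {T : Type*} (s : T) (ξ : ℕ → T) : ℕ → T
  | 0 => s
  | n + 1 => ξ n

section DiscountedReturn

variable {T : Type*} {γ : ℝ}

theorem summable_discountedReturn [Finite T] (hγ : |γ| < 1) (R : T → ℝ) (ξ : ℕ → T) :
    Summable fun j => γ ^ j * R (ξ j) := by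
  obtain ⟨C, hC⟩ := Finite.exists_le fun t => |R t|
  refine ((summable_geometric_of_lt_one (abs_nonneg γ) hγ).mul_right C).of_norm_bounded
    fun j => ?_
  rw [norm_mul, norm_pow, Real.norm_eq_abs, Real.norm_eq_abs]
  exact mul_le_mul_of_nonneg_left (hC (ξ j)) (pow_nonneg (abs_nonneg γ) j)

theorem discountedReturn_prepend [Finite T] (hγ : |γ| < 1) (R : T → ℝ) (s : T) (ξ : ℕ → T) :
    discountedReturn γ R (prepend s ξ) = R s + γ * discountedReturn γ R ξ := by
  unfold discountedReturn
  rw [(summable_discountedReturn hγ R (prepend s ξ)).tsum_eq_zero_add, ← tsum_mul_left]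
  simp only [pow_zero, one_mul, pow_succ, mul_assoc, mul_left_comm _ γ]
  rfl

theorem discountedReturn_eq_of_forall_eq {R : T → ℝ} (hR : ∀ t t', R t = R t')
    (ξ ξ' : ℕ → T) : discountedReturn γ R ξ = discountedReturn γ R ξ' :=
  tsum_congr fun j => by rw [hR (ξ j) (ξ' j)]

theorem apply_add_mul_discountedReturn [Finite T] (hγ : |γ| < 1) {R₁ R₂ : T → ℝ}
    {U : ℝ → ℝ} (hU : ∀ ξ, discountedReturn γ R₂ ξ = U (discountedReturn γ R₁ ξ))
    (s : T) (ξ : ℕ → T) :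
    U (R₁ s + γ * discountedReturn γ R₁ ξ) = R₂ s + γ * U (discountedReturn γ R₁ ξ) := by
  rw [← discountedReturn_prepend hγ, ← hU, ← hU, discountedReturn_prepend hγ]

end DiscountedReturn

theorem two_mul_eq_of_quadratic_bellman {α γ r q a b : ℝ} (hα : α ≠ 0) (hγ : γ ≠ 0)
    (hab : a ≠ b) {U : ℝ → ℝ} (hU : ∀ x, U x = x - α * x ^ 2)
    (ha : U (r + γ * a) = q + γ * U a) (hb : U (r + γ * b) = q + γ * U b) :
    2 * r = (1 - γ) * (a + b) := by
  simp only [hU] at ha hb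
  have hfactor : α * γ * (a - b) * ((1 - γ) * (a + b) - 2 * r) = 0 := by
    linear_combination ha - hb
  have hne : α * γ * (a - b) ≠ 0 := mul_ne_zero (mul_ne_zero hα hγ) (sub_ne_zero.mpr hab)
  linarith [(mul_eq_zero.mp hfactor).resolve_left hne]

theorem stmt_6_general (γ : ℝ) (hγ : 1/2 ≤ γ) (hγ1 : γ < 1)
    (T : Type*) [Fintype T]
    (R₁ : T → ℝ) (α : ℝ) (hα : 0 < α)
    (hnc : ¬ ∀ ξ ξ' : ℕ → T,
      (∑' j : ℕ, γ^j * R₁ (ξ j)) = ∑' j : ℕ, γ^j * R₁ (ξ' j)) :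
    ¬ ∃ R₂ : T → ℝ, ∀ ξ : ℕ → T,
      (∑' j : ℕ, γ^j * R₂ (ξ j)) =
        (∑' j : ℕ, γ^j * R₁ (ξ j)) - α * (∑' j : ℕ, γ^j * R₁ (ξ j))^2 := by
  rintro ⟨R₂, hR₂⟩
  push Not at hnc
  obtain ⟨ξ, ξ', hne⟩ := hnc
  have hγabs : |γ| < 1 := abs_lt.mpr ⟨by linarith, hγ1⟩
  have hbellman := apply_add_mul_discountedReturn hγabs (U := fun x => x - α * x ^ 2) hR₂
  have hR₁ : ∀ s, 2 * R₁ s = (1 - γ) * (discountedReturn γ R₁ ξ + discountedReturn γ R₁ ξ') :=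
    fun s => two_mul_eq_of_quadratic_bellman hα.ne' (by linarith) hne (fun _ => rfl)
      (hbellman s ξ) (hbellman s ξ')
  exact hne (discountedReturn_eq_of_forall_eq (fun t t' => by linarith [hR₁ t, hR₁ t']) ξ ξ')

/-- No Markovian reward realizes the quadratic utility G₁ - α·G₁² of a non-constant
return bounded above by 1/(2α). -/
theorem stmt_6 (γ : ℝ) (hγ : 1/2 ≤ γ) (hγ1 : γ < 1)
    (T : Type*) [Fintype T]
    (R₁ : T → ℝ) (α : ℝ) (hα : 0 < α)
    (hbd : ∀ ξ : ℕ → T, (∑' j : ℕ, γ^j * R₁ (ξ j)) ≤ 1/(2*α))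
    (hnc : ¬ ∀ ξ ξ' : ℕ → T,
      (∑' j : ℕ, γ^j * R₁ (ξ j)) = ∑' j : ℕ, γ^j * R₁ (ξ' j)) :
    ¬ ∃ R₂ : T → ℝ, ∀ ξ : ℕ → T,
      (∑' j : ℕ, γ^j * R₂ (ξ j)) =
        (∑' j : ℕ, γ^j * R₁ (ξ j)) - α * (∑' j : ℕ, γ^j * R₁ (ξ j))^2 :=
  stmt_6_general γ hγ hγ1 T R₁ α hα hnc
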